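/- Fix an integer m ≥ 1. The polynomials F_{m,2}(n;q) = Σ_{k=0}^n k!·W_m(n,k)·q^k and F_{m,1}(n;q) = Σ_{k=0}^n k!·W_m(n,k)·m^k·q^k, where W_m(n,k) are the Whitney numbers of the second kind, are each strongly q-log-convex: for all n ≥ s ≥ 1, F(s-1;q)·F(n+1;q) − F(s;q)·F(n;q) has only nonnegative coefficients. -/

import Mathlib

/-!
Write `a(n,k)` for the coefficients of `F(n;q)`, treating both families at once as
`a(n,k) = k!·W_m(n,k)·c^k` with `c = 1` or `c = m`. The recurrence for `W_m` becomes
`F(n+1) = (1 + c q) F(n) + (m + c q) · q F(n)'`, so that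
`F(p) F(q+1) - F(p+1) F(q) = (m + c q) · q · (F(p) F(q)' - F(p)' F(q))`.
The coefficient of `q^t` in `q · (F(p) F(q)' - F(p)' F(q))` is `Σ_{i+j=t} (j-i) a(p,i) a(q,j)`;
pairing `(i,j)` with `(j,i)` shows it is nonnegative as soon as
`a(p,l) a(q,k) ≤ a(p,k) a(q,l)` for `p ≤ q`, `k ≤ l`. The factors `k!·c^k` cancel, leaving the
same inequality for `W_m`. It holds for consecutive rows because every row of `W_m` is
log-concave without internal zeros (a property the recurrence preserves), and it chains along
rows since the entries are positive on their support.
-/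

open Polynomial

/-- The Whitney numbers of the second kind of the Dowling lattice over a group of
order `m`: `W_m(0,0) = 1`, `W_m(n,k) = 0` for `k > n`, and
`W_m(n,k) = (1+mk)·W_m(n-1,k) + W_m(n-1,k-1)` for `n ≥ k ≥ 1`. -/
def whitney (m : ℕ) : ℕ → ℕ → ℕ
  | 0, 0 => 1
  | 0, _ + 1 => 0
  | n + 1, 0 => whitney m n 0
  | n + 1, k + 1 => (1 + m * (k + 1)) * whitney m n (k + 1) + whitney m n k

/-- The polynomial `F_{m,1}(n;q) = Σ_{k=0}^n k!·W_m(n,k)·m^k·q^k`. -/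
noncomputable def dowlingF1 (m n : ℕ) : Polynomial ℝ :=
  ∑ k ∈ Finset.range (n + 1),
    C ((Nat.factorial k * whitney m n k * m ^ k : ℕ) : ℝ) * X ^ k

/-- The polynomial `F_{m,2}(n;q) = Σ_{k=0}^n k!·W_m(n,k)·q^k`. -/
noncomputable def dowlingF2 (m n : ℕ) : Polynomial ℝ :=
  ∑ k ∈ Finset.range (n + 1),
    C ((Nat.factorial k * whitney m n k : ℕ) : ℝ) * X ^ k

open Finset Nat

theorem mul_le_sq_of_three_term (a b x₀ x₁ x₂ x₃ : ℕ) (h₁ : x₀ * x₂ ≤ x₁ ^ 2)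
    (h₂ : x₁ * x₃ ≤ x₂ ^ 2) (h₃ : x₀ * x₃ ≤ x₁ * x₂) :
    (a * x₁ + x₀) * ((a + 2 * b) * x₃ + x₂) ≤ ((a + b) * x₂ + x₁) ^ 2 := by
  have ha : a * (a + 2 * b) ≤ (a + b) ^ 2 := by nlinarith
  nlinarith [Nat.mul_le_mul ha h₂, Nat.mul_le_mul_left (a + 2 * b) h₃]

def IsLogConcave (x : ℕ → ℕ) : Prop := ∀ k, x k * x (k + 2) ≤ x (k + 1) ^ 2

namespace IsLogConcave

variable {x : ℕ → ℕ}

theorem mul_succ_le_succ_mul (hx : IsLogConcave x) (hz : ∀ j, x j = 0 → x (j + 1) = 0) {i j : ℕ}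
    (hij : i ≤ j) : x i * x (j + 1) ≤ x (i + 1) * x j := by
  induction j, hij using Nat.le_induction with
  | base => rw [mul_comm]
  | succ j _ ih =>
    rcases Nat.eq_zero_or_pos (x (j + 1)) with h0 | hpos
    · simp [hz _ h0]
    · refine Nat.le_of_mul_le_mul_left ?_ hpos
      calc x (j + 1) * (x i * x (j + 2)) = (x i * x (j + 1)) * x (j + 2) := by ring
        _ ≤ (x (i + 1) * x j) * x (j + 2) := Nat.mul_le_mul_right _ ih
        _ = x (i + 1) * (x j * x (j + 2)) := by ring
        _ ≤ x (i + 1) * x (j + 1) ^ 2 := Nat.mul_le_mul_left _ (hx j)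
        _ = x (j + 1) * (x (i + 1) * x (j + 1)) := by ring

variable {y : ℕ → ℕ} {a b : ℕ}

theorem of_linear_recurrence (hx : IsLogConcave x) (hz : ∀ j, x j = 0 → x (j + 1) = 0)
    (hy₀ : y 0 = a * x 0) (hy : ∀ k, y (k + 1) = (a + b * (k + 1)) * x (k + 1) + x k) :
    IsLogConcave y := by
  intro k
  cases k with
  | zero =>
    have h := mul_le_sq_of_three_term a b 0 (x 0) (x 1) (x 2) (by simp) (hx 0) (by simp)
    rw [hy₀, hy, hy]
    convert h using 2 <;> ring
  | succ k =>
    have h := mul_le_sq_of_three_term (a + b * (k + 1)) b (x k) (x (k + 1)) (x (k + 2))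
      (x (k + 3)) (hx k) (hx (k + 1)) (hx.mul_succ_le_succ_mul hz (by omega : k ≤ k + 2))
    rw [hy, hy, hy]
    convert h using 2 <;> ring

theorem mul_le_mul_of_linear_recurrence (hx : IsLogConcave x)
    (hz : ∀ j, x j = 0 → x (j + 1) = 0) (hy₀ : y 0 = a * x 0)
    (hy : ∀ k, y (k + 1) = (a + b * (k + 1)) * x (k + 1) + x k) {k l : ℕ} (hkl : k ≤ l) :
    x l * y k ≤ x k * y l := by
  cases k with
  | zero =>
    have : a * x l ≤ y l := by
      cases l with
      | zero => rw [hy₀]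
      | succ l =>
        rw [hy]
        exact (Nat.mul_le_mul_right _ (Nat.le_add_right _ _)).trans (Nat.le_add_right _ _)
    rw [hy₀]; nlinarith
  | succ k =>
    obtain ⟨l, rfl⟩ : ∃ l', l = l' + 1 := ⟨l - 1, by omega⟩
    have hshift : x k * x (l + 1) ≤ x (k + 1) * x l := hx.mul_succ_le_succ_mul hz (by omega)
    have hcoef : a + b * (k + 1) ≤ a + b * (l + 1) := by gcongr
    rw [hy, hy]
    nlinarith [Nat.mul_le_mul_right (x (k + 1) * x (l + 1)) hcoef]

end IsLogConcave

namespace whitney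

variable (m : ℕ)

theorem succ_zero (n : ℕ) : whitney m (n + 1) 0 = whitney m n 0 := rfl

theorem succ_succ (n k : ℕ) :
    whitney m (n + 1) (k + 1) = (1 + m * (k + 1)) * whitney m n (k + 1) + whitney m n k := rfl

theorem eq_zero_of_lt {n k : ℕ} (h : n < k) : whitney m n k = 0 := by
  induction n generalizing k with
  | zero => obtain ⟨k, rfl⟩ := Nat.exists_eq_add_one_of_ne_zero (by omega : k ≠ 0); rfl
  | succ n ih =>
    obtain ⟨k, rfl⟩ := Nat.exists_eq_add_one_of_ne_zero (by omega : k ≠ 0)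
    rw [succ_succ, ih (by omega), ih (by omega), mul_zero]

theorem pos {n k : ℕ} (h : k ≤ n) : 0 < whitney m n k := by
  induction n generalizing k with
  | zero =>
    obtain rfl : k = 0 := by omega
    exact Nat.one_pos
  | succ n ih =>
    cases k with
    | zero => exact ih (Nat.zero_le n)
    | succ k => exact Nat.add_pos_right _ (ih (by omega))

theorem eq_zero_iff {n k : ℕ} : whitney m n k = 0 ↔ n < k :=
  ⟨fun h => by by_contra! hk; exact (pos m hk).ne' h, eq_zero_of_lt m⟩

theorem eq_zero_succ {n j : ℕ} (h : whitney m n j = 0) : whitney m n (j + 1) = 0 := by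
  rw [eq_zero_iff] at h ⊢; omega

theorem isLogConcave (n : ℕ) : IsLogConcave (whitney m n) := by
  induction n with
  | zero => intro k; rw [eq_zero_of_lt m (by omega : 0 < k + 2)]; simp
  | succ n ih =>
    exact ih.of_linear_recurrence (fun _ => eq_zero_succ m) (one_mul _).symm (succ_succ m n)

theorem mul_le_mul_succ (n : ℕ) {k l : ℕ} (hkl : k ≤ l) :
    whitney m n l * whitney m (n + 1) k ≤ whitney m n k * whitney m (n + 1) l :=
  (isLogConcave m n).mul_le_mul_of_linear_recurrence (y := whitney m (n + 1))
    (fun _ => eq_zero_succ m) (one_mul _).symm (succ_succ m n) hkl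

theorem mul_le_mul_of_le {p q k l : ℕ} (hpq : p ≤ q) (hkl : k ≤ l) :
    whitney m p l * whitney m q k ≤ whitney m p k * whitney m q l := by
  induction q, hpq using Nat.le_induction with
  | base => rw [mul_comm]
  | succ q hpq ih =>
    rcases lt_or_ge p l with hl | hl
    · simp [eq_zero_of_lt m hl]
    · refine Nat.le_of_mul_le_mul_left ?_ (pos m (hl.trans hpq) : 0 < whitney m q l)
      calc whitney m q l * (whitney m p l * whitney m (q + 1) k)
          = whitney m p l * (whitney m q l * whitney m (q + 1) k) := by ring
        _ ≤ whitney m p l * (whitney m q k * whitney m (q + 1) l) :=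
          Nat.mul_le_mul_left _ (mul_le_mul_succ m q hkl)
        _ = (whitney m p l * whitney m q k) * whitney m (q + 1) l := by ring
        _ ≤ (whitney m p k * whitney m q l) * whitney m (q + 1) l := Nat.mul_le_mul_right _ ih
        _ = whitney m q l * (whitney m p k * whitney m (q + 1) l) := by ring

end whitney

namespace Polynomial

variable {R : Type*}

theorem coeff_X_mul_derivative [Semiring R] (p : R[X]) (k : ℕ) :
    (X * derivative p).coeff k = k * p.coeff k := by
  cases k with
  | zero => simp
  | succ k => rw [coeff_X_mul, coeff_derivative, ← Nat.cast_succ, Nat.cast_comm]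

theorem coeff_mul_nonneg [Semiring R] [PartialOrder R] [IsOrderedRing R] {p q : R[X]}
    (hp : ∀ i, 0 ≤ p.coeff i) (hq : ∀ i, 0 ≤ q.coeff i) (n : ℕ) : 0 ≤ (p * q).coeff n := by
  rw [coeff_mul]
  exact sum_nonneg fun x _ => mul_nonneg (hp x.1) (hq x.2)

variable [CommRing R]

theorem coeff_X_mul_wronskian (a b : R[X]) (n : ℕ) :
    (X * wronskian a b).coeff n
      = ∑ x ∈ antidiagonal n, ((x.2 : R) - x.1) * (a.coeff x.1 * b.coeff x.2) := by
  have h : X * wronskian a b = a * (X * derivative b) - X * derivative a * b := by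
    rw [wronskian]; ring
  rw [h, coeff_sub, coeff_mul a, coeff_mul _ b, ← sum_sub_distrib]
  simp only [coeff_X_mul_derivative]
  exact sum_congr rfl fun _ _ => by ring

variable [LinearOrder R] [IsStrictOrderedRing R]

theorem coeff_X_mul_wronskian_nonneg {a b : R[X]}
    (hab : ∀ k l, k ≤ l → a.coeff l * b.coeff k ≤ a.coeff k * b.coeff l) (n : ℕ) :
    0 ≤ (X * wronskian a b).coeff n := by
  set f : ℕ × ℕ → R := fun x => ((x.2 : R) - x.1) * (a.coeff x.1 * b.coeff x.2)
  have hpair : ∀ x, 0 ≤ f x + f x.swap := by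
    intro x
    have e : f x + f x.swap
        = ((x.2 : R) - x.1) * (a.coeff x.1 * b.coeff x.2 - a.coeff x.2 * b.coeff x.1) := by
      simp only [f, Prod.fst_swap, Prod.snd_swap]; ring
    rw [e]
    rcases le_total x.1 x.2 with h | h
    · exact mul_nonneg (sub_nonneg.2 (by exact_mod_cast h)) (sub_nonneg.2 (hab _ _ h))
    · exact mul_nonneg_of_nonpos_of_nonpos (sub_nonpos.2 (by exact_mod_cast h))
        (sub_nonpos.2 (by linarith [hab _ _ h]))
  have h2 : 0 ≤ 2 * ∑ x ∈ antidiagonal n, f x := by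
    rw [two_mul]
    nth_rw 2 [← Nat.sum_antidiagonal_swap]
    rw [← sum_add_distrib]
    exact sum_nonneg fun x _ => hpair x
  rw [coeff_X_mul_wronskian]
  linarith

theorem coeff_mul_sub_mul_nonneg_of_recurrence {P : ℕ → R[X]} {A B : R[X]}
    (hrec : ∀ n, P (n + 1) = A * P n + B * (X * derivative (P n)))
    (hB : ∀ i, 0 ≤ B.coeff i)
    (htp : ∀ p q k l, p ≤ q → k ≤ l →
      (P p).coeff l * (P q).coeff k ≤ (P p).coeff k * (P q).coeff l)
    {p q : ℕ} (hpq : p ≤ q) (i : ℕ) :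
    0 ≤ (P p * P (q + 1) - P (p + 1) * P q).coeff i := by
  have h : P p * P (q + 1) - P (p + 1) * P q = B * (X * wronskian (P p) (P q)) := by
    rw [hrec, hrec, wronskian]; ring
  rw [h]
  exact coeff_mul_nonneg hB (coeff_X_mul_wronskian_nonneg (htp p q · · hpq)) i

end Polynomial

noncomputable def dowlingPoly (m c n : ℕ) : ℝ[X] :=
  ∑ k ∈ range (n + 1), C ((k ! * whitney m n k * c ^ k : ℕ) : ℝ) * X ^ k

theorem coeff_dowlingPoly (m c n k : ℕ) :
    (dowlingPoly m c n).coeff k = k ! * whitney m n k * c ^ k := by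
  rw [dowlingPoly, finsetSum_coeff]
  simp only [coeff_C_mul_X_pow, sum_ite_eq, mem_range]
  split_ifs with hk
  · push_cast; rfl
  · simp [whitney.eq_zero_of_lt m (by omega : n < k)]

theorem dowlingPoly_succ (m c n : ℕ) :
    dowlingPoly m c (n + 1) = (1 + C (c : ℝ) * X) * dowlingPoly m c n
      + (C (m : ℝ) + C (c : ℝ) * X) * (X * derivative (dowlingPoly m c n)) := by
  ext k
  have h : (1 + C (c : ℝ) * X) * dowlingPoly m c n
      + (C (m : ℝ) + C (c : ℝ) * X) * (X * derivative (dowlingPoly m c n))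
      = dowlingPoly m c n + C (m : ℝ) * (X * derivative (dowlingPoly m c n))
        + C (c : ℝ) * (X * (dowlingPoly m c n + X * derivative (dowlingPoly m c n))) := by ring
  rw [h]
  cases k with
  | zero => simp [coeff_dowlingPoly, whitney.succ_zero]
  | succ k =>
    simp only [coeff_add, coeff_C_mul, coeff_X_mul_derivative]
    simp only [coeff_X_mul, coeff_add, coeff_X_mul_derivative, coeff_dowlingPoly,
      whitney.succ_succ, factorial_succ]
    push_cast
    ring

theorem coeff_dowlingPoly_mul_le (m c : ℕ) {p q k l : ℕ} (hpq : p ≤ q) (hkl : k ≤ l) :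
    (dowlingPoly m c p).coeff l * (dowlingPoly m c q).coeff k
      ≤ (dowlingPoly m c p).coeff k * (dowlingPoly m c q).coeff l := by
  have h : (whitney m p l * whitney m q k : ℝ) ≤ whitney m p k * whitney m q l := by
    exact_mod_cast whitney.mul_le_mul_of_le m hpq hkl
  simp only [coeff_dowlingPoly]
  calc (l ! * whitney m p l * c ^ l * (k ! * whitney m q k * c ^ k) : ℝ)
      = (l ! * k ! * c ^ l * c ^ k) * (whitney m p l * whitney m q k) := by ring
    _ ≤ (l ! * k ! * c ^ l * c ^ k) * (whitney m p k * whitney m q l) := by gcongr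
    _ = k ! * whitney m p k * c ^ k * (l ! * whitney m q l * c ^ l) := by ring

theorem coeff_C_add_C_mul_X_nonneg (a b i : ℕ) : 0 ≤ (C (a : ℝ) + C (b : ℝ) * X).coeff i := by
  rw [coeff_add, coeff_C, coeff_C_mul_X]
  split_ifs <;> positivity

theorem dowlingF_strongly_q_log_convex_general (m : ℕ) :
    ∀ s n : ℕ, 1 ≤ s → s ≤ n →
      (∀ i : ℕ,
        0 ≤ (dowlingF2 m (s - 1) * dowlingF2 m (n + 1)
              - dowlingF2 m s * dowlingF2 m n).coeff i) ∧
      (∀ i : ℕ,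
        0 ≤ (dowlingF1 m (s - 1) * dowlingF1 m (n + 1)
              - dowlingF1 m s * dowlingF1 m n).coeff i) := by
  intro s n hs hsn
  obtain ⟨p, rfl⟩ := Nat.exists_eq_add_one_of_ne_zero (by omega : s ≠ 0)
  have hF₁ : ∀ r, dowlingF1 m r = dowlingPoly m m r := fun _ => rfl
  have hF₂ : ∀ r, dowlingF2 m r = dowlingPoly m 1 r := fun _ => by
    simp only [dowlingF2, dowlingPoly, one_pow, mul_one]
  have key (c : ℕ) :=
    coeff_mul_sub_mul_nonneg_of_recurrence (dowlingPoly_succ m c) (coeff_C_add_C_mul_X_nonneg m c)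
      (fun _ _ _ _ => coeff_dowlingPoly_mul_le m c) (by omega : p ≤ n)
  simp only [Nat.add_sub_cancel, hF₁, hF₂]
  exact ⟨key 1, key m⟩

/-- For each fixed `m ≥ 1`, the polynomials `F_{m,2}(n;q)` and
`F_{m,1}(n;q)` are each strongly `q`-log-convex: for all `n ≥ s ≥ 1`,
`F(s-1;q)·F(n+1;q) − F(s;q)·F(n;q)` has nonnegative coefficients. -/
theorem dowlingF_strongly_q_log_convex (m : ℕ) (hm : 1 ≤ m) :
    ∀ s n : ℕ, 1 ≤ s → s ≤ n →
      (∀ i : ℕ,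
        0 ≤ (dowlingF2 m (s - 1) * dowlingF2 m (n + 1)
              - dowlingF2 m s * dowlingF2 m n).coeff i) ∧
      (∀ i : ℕ,
        0 ≤ (dowlingF1 m (s - 1) * dowlingF1 m (n + 1)
              - dowlingF1 m s * dowlingF1 m n).coeff i) :=
  dowlingF_strongly_q_log_convex_general m
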